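/- Let α ≥ 1 be an integer, J ≥ 0 an integer, and let (d_j)_{j≥1} be nonnegative reals with D := ∑_{j≥1} d_j^λ < ∞ for some 0 < λ < 1. Then ∑_{v} (∏_{j∈v, j≤αJ} α!·d_j)^λ · (|v ∩ {j : j > αJ}|! · ∏_{j∈v, j>αJ} d_j)^λ ≤ exp((α!)^λ D) · ∑_{ℓ=0}^∞ (ℓ!)^{λ−1} D^ℓ, where the outer sum ranges over all finite subsets v of the positive integers, and the right-hand side is finite. -/

import Mathlib

/-!
Split each finite set `v` as `w ∪ u` with `w = v ∩ [0, αJ)` and `u = v ∩ [αJ, ∞)`; the sum is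
then at most the product of a sum over `w` and a sum over `u`. The `w`-sum is
`∏_{j < αJ} (1 + (α! d_j)^λ) ≤ exp ((α!)^λ D)`. In the `u`-sum the sets of cardinality `ℓ`
contribute `(ℓ!)^λ e_ℓ`, where `e_ℓ` is the elementary symmetric function of the `d_j^λ`, and
`ℓ! e_ℓ ≤ (∑ d_j^λ)^ℓ ≤ D^ℓ`. The resulting series `∑ (ℓ!)^(λ-1) D^ℓ` converges by the ratio test,
the ratio `(ℓ+1)^(λ-1) D` tending to `0` because `λ < 1`.
-/

open Finset Nat

theorem Finset.factorial_mul_sum_powersetCard_prod_le {ι R : Type*} [CommSemiring R]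
    [LinearOrder R] [IsOrderedRing R] [ExistsAddOfLE R] {c : ι → R} (hc : ∀ j, 0 ≤ c j)
    (s : Finset ι) (ℓ : ℕ) :
    (ℓ ! : R) * ∑ u ∈ s.powersetCard ℓ, ∏ j ∈ u, c j ≤ (∑ j ∈ s, c j) ^ ℓ := by
  classical
  induction s using Finset.induction_on generalizing ℓ with
  | empty =>
    cases ℓ with
    | zero => simp
    | succ m => simp [powersetCard_eq_empty.2 (card_empty.trans_lt m.succ_pos)]
  | insert a s ha ih =>
    cases ℓ with
    | zero => simp
    | succ m =>
      have hsplit : ∑ u ∈ (insert a s).powersetCard (m + 1), ∏ j ∈ u, c j =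
          ∑ u ∈ s.powersetCard (m + 1), ∏ j ∈ u, c j +
            c a * ∑ u ∈ s.powersetCard m, ∏ j ∈ u, c j := by
        have hau : ∀ u ∈ s.powersetCard m, a ∉ u := fun u hu h =>
          ha ((mem_powersetCard.1 hu).1 h)
        rw [powersetCard_succ_insert ha, sum_union, sum_image, mul_sum]
        · exact congrArg _ (sum_congr rfl fun u hu => prod_insert (hau u hu))
        · exact insert_erase_invOn.2.injOn.mono fun u hu => hau u hu
        · refine disjoint_left.2 fun u hu hu' => ?_
          obtain ⟨t, -, rfl⟩ := mem_image.1 hu'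
          exact ha ((mem_powersetCard.1 hu).1 (mem_insert_self a t))
      set S := ∑ j ∈ s, c j
      have hS : 0 ≤ S := sum_nonneg fun j _ => hc j
      calc ((m + 1) ! : R) * ∑ u ∈ (insert a s).powersetCard (m + 1), ∏ j ∈ u, c j
          = ((m + 1) ! : R) * ∑ u ∈ s.powersetCard (m + 1), ∏ j ∈ u, c j +
              (m + 1 : ℕ) * c a * ((m ! : R) * ∑ u ∈ s.powersetCard m, ∏ j ∈ u, c j) := by
            rw [hsplit, factorial_succ]; push_cast; ring
        _ ≤ S ^ (m + 1) + (m + 1 : ℕ) * S ^ m * c a := by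
            grw [ih, ih]
            · rw [mul_right_comm]
            · exact mul_nonneg (cast_nonneg _) (hc a)
        _ ≤ (S + c a) ^ (m + 1) :=
            pow_add_mul_le_add_pow hS (add_nonneg (mul_nonneg zero_le_two hS) (hc a)) _
        _ = (∑ j ∈ insert a s, c j) ^ (m + 1) := by rw [sum_insert ha, add_comm]

theorem Finset.sum_powerset_factorial_rpow_mul_prod_le {ι : Type*} {c : ι → ℝ}
    (hc : ∀ j, 0 ≤ c j) (lam : ℝ) (s : Finset ι) :
    ∑ u ∈ s.powerset, ((#u) ! : ℝ) ^ lam * ∏ j ∈ u, c j ≤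
      ∑ ℓ ∈ range (#s + 1), (ℓ ! : ℝ) ^ (lam - 1) * (∑ j ∈ s, c j) ^ ℓ := by
  rw [sum_powerset]
  gcongr with ℓ
  have hℓ : (0 : ℝ) < ℓ ! := by positivity
  calc ∑ u ∈ s.powersetCard ℓ, ((#u) ! : ℝ) ^ lam * ∏ j ∈ u, c j
      = (ℓ ! : ℝ) ^ (lam - 1) * ((ℓ ! : ℝ) * ∑ u ∈ s.powersetCard ℓ, ∏ j ∈ u, c j) := by
        rw [mul_sum, mul_sum]
        refine sum_congr rfl fun u hu => ?_
        rw [(mem_powersetCard.1 hu).2, ← mul_assoc, ← Real.rpow_add_one hℓ.ne', sub_add_cancel]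
    _ ≤ (ℓ ! : ℝ) ^ (lam - 1) * (∑ j ∈ s, c j) ^ ℓ := by
        gcongr
        exact factorial_mul_sum_powersetCard_prod_le hc s ℓ

theorem summable_factorial_rpow_mul_pow {lam : ℝ} (hlam : lam < 1) (x : ℝ) :
    Summable fun ℓ : ℕ => (ℓ ! : ℝ) ^ (lam - 1) * x ^ ℓ := by
  set b : ℕ → ℝ := fun ℓ => (ℓ ! : ℝ) ^ (lam - 1) * x ^ ℓ
  have hratio : ∀ n : ℕ, ‖b (n + 1)‖ = ((n + 1 : ℝ) ^ (lam - 1) * |x|) * ‖b n‖ := by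
    intro n
    have hfac :
        ((n + 1) ! : ℝ) ^ (lam - 1) = (n + 1 : ℝ) ^ (lam - 1) * (n ! : ℝ) ^ (lam - 1) := by
      rw [factorial_succ, cast_mul, cast_succ, Real.mul_rpow (by positivity) (by positivity)]
    simp only [b, norm_mul, norm_pow, Real.norm_eq_abs, hfac,
      abs_of_nonneg (Real.rpow_nonneg (cast_nonneg _) _),
      abs_of_nonneg (Real.rpow_nonneg n.cast_add_one_pos.le _)]
    ring
  have hlim : Filter.Tendsto (fun n : ℕ => (n + 1 : ℝ) ^ (lam - 1) * |x|) Filter.atTop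
      (nhds 0) := by
    have := ((tendsto_rpow_neg_atTop (sub_pos.2 hlam)).comp
      (tendsto_natCast_atTop_atTop.atTop_add (tendsto_const_nhds (x := (1 : ℝ))))).mul_const |x|
    simpa [neg_sub] using this
  refine summable_of_ratio_norm_eventually_le (r := 1 / 2) (by norm_num) ?_
  filter_upwards [hlim.eventually_lt_const (by norm_num : (0 : ℝ) < 1 / 2)] with n hn
  rw [hratio]
  exact mul_le_mul_of_nonneg_right hn.le (norm_nonneg _)

theorem sum_factorial_rpow_mul_prod_le_tsum {ι : Type*} {c : ι → ℝ} (hc : ∀ j, 0 ≤ c j)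
    (hcs : Summable c) {lam : ℝ} (hlam : lam < 1) (U : Finset (Finset ι)) :
    ∑ u ∈ U, ((#u) ! : ℝ) ^ lam * ∏ j ∈ u, c j ≤
      ∑' ℓ : ℕ, (ℓ ! : ℝ) ^ (lam - 1) * (∑' j, c j) ^ ℓ := by
  classical
  set s := U.sup id
  have hterm_nonneg : ∀ u, 0 ≤ ((#u) ! : ℝ) ^ lam * ∏ j ∈ u, c j := fun u =>
    mul_nonneg (Real.rpow_nonneg (cast_nonneg _) _) (prod_nonneg fun j _ => hc j)
  calc ∑ u ∈ U, ((#u) ! : ℝ) ^ lam * ∏ j ∈ u, c j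
      ≤ ∑ u ∈ s.powerset, ((#u) ! : ℝ) ^ lam * ∏ j ∈ u, c j :=
        sum_le_sum_of_subset_of_nonneg (fun u hu => mem_powerset.2 (le_sup (f := id) hu))
          fun u _ _ => hterm_nonneg u
    _ ≤ ∑ ℓ ∈ range (#s + 1), (ℓ ! : ℝ) ^ (lam - 1) * (∑ j ∈ s, c j) ^ ℓ :=
        sum_powerset_factorial_rpow_mul_prod_le hc lam s
    _ ≤ ∑ ℓ ∈ range (#s + 1), (ℓ ! : ℝ) ^ (lam - 1) * (∑' j, c j) ^ ℓ := by
        gcongr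
        · exact sum_nonneg fun j _ => hc j
        · exact hcs.sum_le_tsum _ fun j _ => hc j
    _ ≤ ∑' ℓ : ℕ, (ℓ ! : ℝ) ^ (lam - 1) * (∑' j, c j) ^ ℓ :=
        (summable_factorial_rpow_mul_pow hlam _).sum_le_tsum _ fun ℓ _ =>
          mul_nonneg (Real.rpow_nonneg (cast_nonneg _) _) (pow_nonneg (tsum_nonneg hc) _)

theorem Real.sum_powerset_prod_le_exp_sum {ι : Type*} {f : ι → ℝ} (hf : ∀ i, 0 ≤ f i)
    (s : Finset ι) : ∑ t ∈ s.powerset, ∏ i ∈ t, f i ≤ Real.exp (∑ i ∈ s, f i) :=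
  (prod_one_add s).symm.le.trans (Real.prod_one_add_le_exp_sum s hf)

theorem Finset.sum_filter_mul_filter_le {ι R : Type*} [CommSemiring R] [PartialOrder R]
    [IsOrderedRing R] {p q : ι → Prop} [DecidablePred p] [DecidablePred q]
    (hpq : ∀ j, p j ∨ q j) {s : Finset ι} (hs : ∀ j, p j → j ∈ s) {g h : Finset ι → R}
    (hg : ∀ w, 0 ≤ g w) (hh : ∀ u, 0 ≤ h u) {A B : R}
    (hA : ∑ w ∈ s.powerset, g w ≤ A) (hB : ∀ U : Finset (Finset ι), ∑ u ∈ U, h u ≤ B)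
    (V : Finset (Finset ι)) :
    ∑ v ∈ V, g (v.filter p) * h (v.filter q) ≤ A * B := by
  classical
  set split : Finset ι → Finset ι × Finset ι := fun v => (v.filter p, v.filter q)
  have hsplit : Set.InjOn split V := by
    intro v _ v' _ hvv'
    rw [← filter_true_of_mem (fun j _ => hpq j) (s := v),
      ← filter_true_of_mem (fun j _ => hpq j) (s := v'), filter_or, filter_or]
    simp only [split, Prod.mk.injEq] at hvv'
    rw [hvv'.1, hvv'.2]
  have hsub : V.image split ⊆ s.powerset ×ˢ V.image (·.filter q) := by
    intro x hx
    obtain ⟨v, hv, rfl⟩ := mem_image.1 hx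
    exact mem_product.2 ⟨mem_powerset.2 fun j hj => hs j (mem_filter.1 hj).2,
      mem_image_of_mem _ hv⟩
  calc ∑ v ∈ V, g (v.filter p) * h (v.filter q)
      = ∑ x ∈ V.image split, g x.1 * h x.2 :=
        (sum_image (f := fun x => g x.1 * h x.2) hsplit).symm
    _ ≤ ∑ x ∈ s.powerset ×ˢ V.image (·.filter q), g x.1 * h x.2 :=
        sum_le_sum_of_subset_of_nonneg hsub fun x _ _ => mul_nonneg (hg _) (hh _)
    _ = (∑ w ∈ s.powerset, g w) * ∑ u ∈ V.image (·.filter q), h u := by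
        rw [sum_product, sum_mul_sum]
    _ ≤ A * B := mul_le_mul hA (hB _) (sum_nonneg fun u _ => hh u)
        ((sum_nonneg fun w _ => hg w).trans hA)

theorem stmt16_general (α J : ℕ) (d : ℕ → ℝ) (hd0 : ∀ j, 0 ≤ d j)
    (lam : ℝ) (hlam1 : lam < 1)
    (hD : Summable (fun j => d j ^ lam)) :
    (∑' v : Finset ℕ,
        (∏ j ∈ v.filter (fun j => j < α * J), ((α.factorial : ℝ) * d j)) ^ lam *
          (((v.filter (fun j => α * J ≤ j)).card.factorial : ℝ) *
            ∏ j ∈ v.filter (fun j => α * J ≤ j), d j) ^ lam)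
      ≤ Real.exp ((α.factorial : ℝ) ^ lam * ∑' j, d j ^ lam) *
          ∑' ℓ : ℕ, (ℓ.factorial : ℝ) ^ (lam - 1) * (∑' j, d j ^ lam) ^ ℓ ∧
    Summable (fun ℓ : ℕ => (ℓ.factorial : ℝ) ^ (lam - 1) * (∑' j, d j ^ lam) ^ ℓ) := by
  have hc : ∀ j, 0 ≤ d j ^ lam := fun j => Real.rpow_nonneg (hd0 j) lam
  have hfd : ∀ j, 0 ≤ (α ! : ℝ) * d j := fun j => mul_nonneg (cast_nonneg _) (hd0 j)
  have hlow : ∑ w ∈ (range (α * J)).powerset, (∏ j ∈ w, (α ! : ℝ) * d j) ^ lam ≤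
      Real.exp ((α ! : ℝ) ^ lam * ∑' j, d j ^ lam) := by
    simp_rw [← Real.finsetProd_rpow _ _ fun j _ => hfd j, Real.mul_rpow (cast_nonneg _) (hd0 _)]
    refine (Real.sum_powerset_prod_le_exp_sum
      (fun j => mul_nonneg (by positivity) (hc j)) _).trans ?_
    rw [← mul_sum]
    gcongr
    exact hD.sum_le_tsum _ fun j _ => hc j
  have hhigh : ∀ U : Finset (Finset ℕ), ∑ u ∈ U, (((#u) ! : ℝ) * ∏ j ∈ u, d j) ^ lam ≤
      ∑' ℓ : ℕ, (ℓ ! : ℝ) ^ (lam - 1) * (∑' j, d j ^ lam) ^ ℓ := by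
    simp_rw [Real.mul_rpow (cast_nonneg _) (prod_nonneg fun j _ => hd0 j),
      ← Real.finsetProd_rpow _ _ fun j _ => hd0 j]
    exact sum_factorial_rpow_mul_prod_le_tsum hc hD hlam1
  have hg : ∀ w : Finset ℕ, 0 ≤ (∏ j ∈ w, (α ! : ℝ) * d j) ^ lam := fun w =>
    Real.rpow_nonneg (prod_nonneg fun j _ => hfd j) _
  have hh : ∀ u : Finset ℕ, 0 ≤ (((#u) ! : ℝ) * ∏ j ∈ u, d j) ^ lam := fun u =>
    Real.rpow_nonneg (mul_nonneg (cast_nonneg _) (prod_nonneg fun j _ => hd0 j)) _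
  have hpartial := sum_filter_mul_filter_le (fun j => lt_or_ge j (α * J))
    (fun j => mem_range.2) hg hh hlow hhigh
  exact ⟨(summable_of_sum_le (fun v => mul_nonneg (hg _) (hh _)) hpartial).tsum_le_of_sum_le
    hpartial, summable_factorial_rpow_mul_pow hlam1 _⟩

theorem stmt16 (α J : ℕ) (hα : 1 ≤ α) (d : ℕ → ℝ) (hd0 : ∀ j, 0 ≤ d j)
    (lam : ℝ) (hlam0 : 0 < lam) (hlam1 : lam < 1)
    (hD : Summable (fun j => d j ^ lam)) :
    (∑' v : Finset ℕ,
        (∏ j ∈ v.filter (fun j => j < α * J), ((α.factorial : ℝ) * d j)) ^ lam *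
          (((v.filter (fun j => α * J ≤ j)).card.factorial : ℝ) *
            ∏ j ∈ v.filter (fun j => α * J ≤ j), d j) ^ lam)
      ≤ Real.exp ((α.factorial : ℝ) ^ lam * ∑' j, d j ^ lam) *
          ∑' ℓ : ℕ, (ℓ.factorial : ℝ) ^ (lam - 1) * (∑' j, d j ^ lam) ^ ℓ ∧
    Summable (fun ℓ : ℕ => (ℓ.factorial : ℝ) ^ (lam - 1) * (∑' j, d j ^ lam) ^ ℓ) :=
  stmt16_general α J d hd0 lam hlam1 hD
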